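/- Let R = [[R_I, R_IJ],[R_JI, R_J]] be Hermitian positive semidefinite, d_I ∈ ℂ^l nonzero, p = R_JI d_I, r = d_I† R_I d_I, d = d_I† d_I. Suppose λ̃ > λ_1(R_J) satisfies the secular equation λ̃ d − r = p†(λ̃ I − R_J)^{-1} p. Then for every w ∈ ℂ^m, η(w) = (r + w† R_J w + p† w + w† p)/(d + w† w) ≤ λ̃. -/

import Mathlib

open Matrix BigOperators ComplexOrder

/-!
Since `λ̃` exceeds every eigenvalue of the Hermitian block `R_J`, the matrix `G = λ̃ I - R_J` is
positive definite, and expanding `(w - G⁻¹ p)† G (w - G⁻¹ p) ≥ 0` gives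
`p† w + w† p ≤ w† G w + p† G⁻¹ p`. Now `w† (R_J + G) w = λ̃ w† w` and, by the secular equation,
`r + p† G⁻¹ p = λ̃ d`, so the numerator of `η(w)` is at most `λ̃ (d + w† w)`.
-/

namespace Matrix

variable {𝕜 n : Type*} [RCLike 𝕜] [Fintype n] [DecidableEq n]

lemma IsHermitian.posDef_smul_one_sub {A : Matrix n n 𝕜} (hA : A.IsHermitian) {c : ℝ}
    (h : ∀ (t : ℝ) (v : n → 𝕜), v ≠ 0 → A *ᵥ v = (t : 𝕜) • v → t < c) :
    ((c : 𝕜) • (1 : Matrix n n 𝕜) - A).PosDef := by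
  have hG : ((c : 𝕜) • (1 : Matrix n n 𝕜) - A).IsHermitian := by
    simp only [IsHermitian, conjTranspose_sub, conjTranspose_smul, conjTranspose_one,
      RCLike.star_def, RCLike.conj_ofReal, hA.eq]
  refine hG.posDef_iff_eigenvalues_pos.mpr fun i => ?_
  set v : n → 𝕜 := ⇑(hG.eigenvectorBasis i)
  have hv : v ≠ 0 := (WithLp.ofLp_eq_zero _).not.mpr (hG.eigenvectorBasis.orthonormal.ne_zero i)
  have hAv : A *ᵥ v = ((c - hG.eigenvalues i : ℝ) : 𝕜) • v := by
    have hGv := hG.mulVec_eigenvectorBasis i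
    rw [sub_mulVec, smul_mulVec, one_mulVec, RCLike.real_smul_eq_coe_smul (K := 𝕜)] at hGv
    rw [RCLike.ofReal_sub, sub_smul, ← hGv, sub_sub_cancel]
  linarith [h _ v hv hAv]

lemma PosDef.re_dotProduct_add_le {G : Matrix n n 𝕜} (hG : G.PosDef) (p w : n → 𝕜) :
    RCLike.re (star p ⬝ᵥ w + star w ⬝ᵥ p) ≤
      RCLike.re (star w ⬝ᵥ (G *ᵥ w)) + RCLike.re (star p ⬝ᵥ (G⁻¹ *ᵥ p)) := by
  set u := G⁻¹ *ᵥ p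
  have hGu : G *ᵥ u = p := by
    rw [mulVec_mulVec, mul_nonsing_inv _ ((isUnit_iff_isUnit_det G).mp hG.isUnit), one_mulVec]
  have hpu : star u ⬝ᵥ p = star p ⬝ᵥ u := by
    conv_lhs => rw [← hGu, dotProduct_mulVec, ← hG.isHermitian.eq, ← star_mulVec, hGu]
  have hsquare : star (w - u) ⬝ᵥ (G *ᵥ (w - u)) =
      star w ⬝ᵥ (G *ᵥ w) - (star p ⬝ᵥ w + star w ⬝ᵥ p) + star p ⬝ᵥ u := by
    rw [mulVec_sub, hGu, star_sub, sub_dotProduct, dotProduct_sub, dotProduct_sub,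
      dotProduct_mulVec (star u), ← hG.isHermitian.eq, ← star_mulVec, hG.isHermitian.eq, hGu, hpu]
    ring
  have hnonneg := hG.posSemidef.re_dotProduct_nonneg (w - u)
  rw [hsquare, map_add, map_sub] at hnonneg
  linarith

end Matrix

theorem stmt11_general {l m : ℕ}
    (RI : Matrix (Fin l) (Fin l) ℂ) (RIJ : Matrix (Fin l) (Fin m) ℂ)
    (RJI : Matrix (Fin m) (Fin l) ℂ) (RJ : Matrix (Fin m) (Fin m) ℂ)
    (hR : (Matrix.fromBlocks RI RIJ RJI RJ).PosSemidef)
    (dI : Fin l → ℂ) (hdI : dI ≠ 0)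
    (p : Fin m → ℂ)
    (r d : ℝ) (hd : (d : ℂ) = star dI ⬝ᵥ dI)
    (lam1 : ℝ)
    (hlam1 : IsGreatest {t : ℝ | ∃ v : Fin m → ℂ, v ≠ 0 ∧ RJ *ᵥ v = (t : ℂ) • v} lam1)
    (lt : ℝ) (hgt : lam1 < lt)
    (hsec : ((lt * d - r : ℝ) : ℂ) =
      star p ⬝ᵥ (((lt : ℂ) • (1 : Matrix (Fin m) (Fin m) ℂ) - RJ)⁻¹ *ᵥ p)) :
    ∀ w : Fin m → ℂ,
      ((r : ℂ) + star w ⬝ᵥ (RJ *ᵥ w) + star p ⬝ᵥ w + star w ⬝ᵥ p).re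
        / ((d : ℂ) + star w ⬝ᵥ w).re ≤ lt := by
  intro w
  have hRJ : RJ.IsHermitian := (isHermitian_fromBlocks_iff.mp hR.isHermitian).2.2.2
  have hG : ((lt : ℂ) • (1 : Matrix (Fin m) (Fin m) ℂ) - RJ).PosDef :=
    hRJ.posDef_smul_one_sub fun t v hv hRJv => (hlam1.2 ⟨v, hv, hRJv⟩).trans_lt hgt
  have hcross := hG.re_dotProduct_add_le p w
  rw [← hsec, sub_mulVec, smul_mulVec, one_mulVec, dotProduct_sub, dotProduct_smul] at hcross
  have hd_pos : 0 < d := Complex.zero_lt_real.mp (hd ▸ dotProduct_star_self_pos_iff.mpr hdI)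
  have hw : 0 ≤ (star w ⬝ᵥ w).re := (Complex.nonneg_iff.mp (dotProduct_star_self_nonneg w)).1
  rw [div_le_iff₀ (by simp only [Complex.add_re, Complex.ofReal_re]; linarith)]
  simp only [Complex.add_re, Complex.ofReal_re, RCLike.re_to_complex, Complex.sub_re,
    Complex.re_ofReal_mul, smul_eq_mul] at hcross ⊢
  linarith

/-- if `λ̃ > λ₁(R_J)` satisfies the secular equation, then the
sub-problem objective is bounded: `η(w) ≤ λ̃` for every `w`. -/
theorem stmt11 {l m : ℕ}
    (RI : Matrix (Fin l) (Fin l) ℂ) (RIJ : Matrix (Fin l) (Fin m) ℂ)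
    (RJI : Matrix (Fin m) (Fin l) ℂ) (RJ : Matrix (Fin m) (Fin m) ℂ)
    (hR : (Matrix.fromBlocks RI RIJ RJI RJ).PosSemidef)
    (dI : Fin l → ℂ) (hdI : dI ≠ 0)
    (p : Fin m → ℂ) (hp : p = RJI *ᵥ dI)
    (r d : ℝ) (hr : (r : ℂ) = star dI ⬝ᵥ (RI *ᵥ dI)) (hd : (d : ℂ) = star dI ⬝ᵥ dI)
    (lam1 : ℝ)
    (hlam1 : IsGreatest {t : ℝ | ∃ v : Fin m → ℂ, v ≠ 0 ∧ RJ *ᵥ v = (t : ℂ) • v} lam1)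
    (lt : ℝ) (hgt : lam1 < lt)
    (hsec : ((lt * d - r : ℝ) : ℂ) =
      star p ⬝ᵥ (((lt : ℂ) • (1 : Matrix (Fin m) (Fin m) ℂ) - RJ)⁻¹ *ᵥ p)) :
    ∀ w : Fin m → ℂ,
      ((r : ℂ) + star w ⬝ᵥ (RJ *ᵥ w) + star p ⬝ᵥ w + star w ⬝ᵥ p).re
        / ((d : ℂ) + star w ⬝ᵥ w).re ≤ lt :=
  stmt11_general RI RIJ RJI RJ hR dI hdI p r d hd lam1 hlam1 lt hgt hsec
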